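/- Let H be the graph constructed from G and ℓ, with target sets X and Y of size ℓ. Then there exists a reconfiguration sequence 𝒮 from X to Y in H consisting only of subsets of V ∪ X ∪ Y and satisfying ‖𝒮‖ = opt_H(X ⇝ Y). -/
import Mathlib


namespace TSS

variable {V : Type*}

/-- The set of active vertices after `i` steps of the activation process started from `S`. -/
def activeAt (G : SimpleGraph V) (τ : V → ℕ) (S : Set V) : ℕ → Set V
  | 0 => S
  | i + 1 => activeAt G τ S i ∪ { v | τ v ≤ (G.neighborSet v ∩ activeAt G τ S i).ncard }

/-- The active vertex set `𝒜(S) = ⋃ i, 𝒜ⁱ(S)`. -/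
def activeSet (G : SimpleGraph V) (τ : V → ℕ) (S : Set V) : Set V :=
  ⋃ i, activeAt G τ S i

/-- `S` is a target set for `(G, τ)` if it activates every vertex. -/
def IsTargetSet (G : SimpleGraph V) (τ : V → ℕ) (S : Set V) : Prop :=
  activeSet G τ S = Set.univ

/-- Minimum size of a target set. -/
noncomputable def optTS (G : SimpleGraph V) (τ : V → ℕ) : ℕ :=
  sInf { m | ∃ S : Set V, IsTargetSet G τ S ∧ S.ncard = m }

/-- A reconfiguration sequence `Sfam 0 = X, …, Sfam T = Y` of target sets where
consecutive sets differ in exactly one vertex. -/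
structure IsReconfSeq (G : SimpleGraph V) (τ : V → ℕ) (X Y : Set V) (T : ℕ)
    (Sfam : ℕ → Set V) : Prop where
  head : Sfam 0 = X
  last : Sfam T = Y
  target : ∀ t ≤ T, IsTargetSet G τ (Sfam t)
  step : ∀ t < T, (symmDiff (Sfam t) (Sfam (t + 1))).ncard = 1

/-- The size of a reconfiguration sequence: maximum cardinality of any member. -/
noncomputable def seqSize (T : ℕ) (Sfam : ℕ → Set V) : ℕ :=
  (Finset.range (T + 1)).sup fun t => (Sfam t).ncard

/-- `opt_G(X ⇝ Y)`: minimum size over all reconfiguration sequences from `X` to `Y`. -/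
noncomputable def optReconf (G : SimpleGraph V) (τ : V → ℕ) (X Y : Set V) : ℕ :=
  sInf { m | ∃ T Sfam, IsReconfSeq G τ X Y T Sfam ∧ seqSize T Sfam = m }

/-- The four internal vertices of a one-way gadget. -/
inductive GadVert where | t | h | b1 | b2

/-- Index set of the one-way gadgets of the graph `H` built from `G` (with degree
function `d`) and `ℓ`. -/
inductive GadIdx (V : Type*) (ℓ : ℕ) (d : V → ℕ) where
  | vx (v : V) (i : Fin ℓ)
  | xa (i : Fin ℓ) (v : V) (j : Fin (d v))
  | av (v : V) (j : Fin (d v))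
  | vy (v : V) (i : Fin ℓ)
  | yb (i : Fin ℓ) (v : V) (j : Fin (d v))
  | bv (v : V) (j : Fin (d v))

/-- Vertices of the graph `H`: a copy of `V`, the sets `X`, `Y`, `A`, `B`, and the
internal vertices of all one-way gadgets. -/
inductive HVert (V : Type*) (ℓ : ℕ) (d : V → ℕ) where
  | orig (v : V)
  | xx (i : Fin ℓ)
  | yy (i : Fin ℓ)
  | aa (v : V) (j : Fin (d v))
  | bb (v : V) (j : Fin (d v))
  | gad (D : GadIdx V ℓ d) (w : GadVert)

variable {ℓ : ℕ} {d : V → ℕ}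

/-- The tail of a one-way gadget. -/
def gadTail : GadIdx V ℓ d → HVert V ℓ d
  | .vx v _ => .orig v
  | .xa i _ _ => .xx i
  | .av v j => .aa v j
  | .vy v _ => .orig v
  | .yb i _ _ => .yy i
  | .bv v j => .bb v j

/-- The head of a one-way gadget. -/
def gadHead : GadIdx V ℓ d → HVert V ℓ d
  | .vx _ i => .xx i
  | .xa _ v j => .aa v j
  | .av v _ => .orig v
  | .vy _ i => .yy i
  | .yb _ v j => .bb v j
  | .bv v _ => .orig v

/-- Base edge relation of the graph `H`. -/
def HRel (G : SimpleGraph V) (ℓ : ℕ) (d : V → ℕ) : HVert V ℓ d → HVert V ℓ d → Prop :=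
  fun p q =>
    (∃ u v, G.Adj u v ∧ p = .orig u ∧ q = .orig v) ∨
    (∃ D, p = .gad D .t ∧ (q = .gad D .b1 ∨ q = .gad D .b2)) ∨
    (∃ D, p = .gad D .h ∧ (q = .gad D .b1 ∨ q = .gad D .b2)) ∨
    (∃ D, p = gadTail D ∧ q = .gad D .t) ∨
    (∃ D, p = gadHead D ∧ q = .gad D .h)

/-- The graph `H` constructed from `G` (with degree function `d`) and `ℓ`. -/
def graphH (G : SimpleGraph V) (ℓ : ℕ) (d : V → ℕ) : SimpleGraph (HVert V ℓ d) :=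
  SimpleGraph.fromRel (HRel G ℓ d)

/-- The threshold function `τ'` of `H`, where `n` is the number of vertices of `G`. -/
def tauH (τ : V → ℕ) (n ℓ : ℕ) (d : V → ℕ) : HVert V ℓ d → ℕ
  | .orig v => τ v
  | .xx _ => n
  | .yy _ => n
  | .aa _ _ => ℓ
  | .bb _ _ => ℓ
  | .gad _ .t => 1
  | .gad _ .b1 => 1
  | .gad _ .b2 => 1
  | .gad _ .h => 2

/-- The vertex set `X = {x₁, …, x_ℓ}` of `H`. -/
def XSet (V : Type*) (ℓ : ℕ) (d : V → ℕ) : Set (HVert V ℓ d) := Set.range HVert.xx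

/-- The vertex set `Y = {y₁, …, y_ℓ}` of `H`. -/
def YSet (V : Type*) (ℓ : ℕ) (d : V → ℕ) : Set (HVert V ℓ d) := Set.range HVert.yy

/-- The copy of `V` inside `V(H)`. -/
def OrigSet (V : Type*) (ℓ : ℕ) (d : V → ℕ) : Set (HVert V ℓ d) := Set.range HVert.orig

/-- The vertex set `A = {a_{v,j}}` of `H`. -/
def ASet (V : Type*) (ℓ : ℕ) (d : V → ℕ) : Set (HVert V ℓ d) :=
  { p | ∃ v j, p = HVert.aa v j }

/-- The vertex set `B = {b_{v,j}}` of `H`. -/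
def BSet (V : Type*) (ℓ : ℕ) (d : V → ℕ) : Set (HVert V ℓ d) :=
  { p | ∃ v j, p = HVert.bb v j }

section Basics
variable {W : Type*} {G : SimpleGraph W} {τ : W → ℕ} {S T : Set W}

lemma activeAt_mono_succ (i : ℕ) : activeAt G τ S i ⊆ activeAt G τ S (i+1) :=
  Set.subset_union_left

lemma activeAt_mono {i j : ℕ} (h : i ≤ j) : activeAt G τ S i ⊆ activeAt G τ S j := by
  induction j with
  | zero => simp [Nat.le_zero.mp h]
  | succ j ih =>
    rcases Nat.lt_or_ge i (j+1) with h' | h'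
    · exact (ih (Nat.lt_succ_iff.mp h')).trans (activeAt_mono_succ j)
    · have : i = j + 1 := le_antisymm h h'
      simp [this]

lemma subset_activeSet : S ⊆ activeSet G τ S := fun x hx =>
  Set.mem_iUnion.2 ⟨0, hx⟩

lemma activeAt_subset_activeSet (i : ℕ) : activeAt G τ S i ⊆ activeSet G τ S :=
  Set.subset_iUnion (fun i => activeAt G τ S i) i

variable [Finite W]

lemma activeAt_mono_set (h : S ⊆ T) : ∀ i, activeAt G τ S i ⊆ activeAt G τ T i
  | 0 => h
  | (i+1) => by
    apply Set.union_subset_union (activeAt_mono_set h i)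
    intro v hv
    exact le_trans hv (Set.ncard_le_ncard
      (Set.inter_subset_inter_right _ (activeAt_mono_set h i)) (Set.toFinite _))

lemma activeSet_mono (h : S ⊆ T) : activeSet G τ S ⊆ activeSet G τ T := by
  intro x hx
  obtain ⟨i, hi⟩ := Set.mem_iUnion.1 hx
  exact Set.mem_iUnion.2 ⟨i, activeAt_mono_set h i hi⟩

lemma exists_activeAt_of_subset {F : Set W} (hF : F ⊆ activeSet G τ S) :
    ∃ i, F ⊆ activeAt G τ S i := by
  have hch : ∀ x : F, ∃ i, (x : W) ∈ activeAt G τ S i := fun x => Set.mem_iUnion.1 (hF x.2)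
  choose f hf using hch
  rcases isEmpty_or_nonempty F with h | h
  · exact ⟨0, fun x hx => (h.false ⟨x, hx⟩).elim⟩
  · obtain ⟨x₀, hx₀⟩ := Finite.exists_max f
    exact ⟨f x₀, fun x hx => activeAt_mono (hx₀ ⟨x, hx⟩) (hf ⟨x, hx⟩)⟩

/-- closure: activeSet is closed under the activation rule -/
lemma mem_activeSet_of_threshold {v : W}
    (h : τ v ≤ (G.neighborSet v ∩ activeSet G τ S).ncard) : v ∈ activeSet G τ S := by
  obtain ⟨i, hi⟩ := exists_activeAt_of_subset
    (Set.inter_subset_right : G.neighborSet v ∩ activeSet G τ S ⊆ _)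
  have h2 : τ v ≤ (G.neighborSet v ∩ activeAt G τ S i).ncard := by
    refine le_trans h (Set.ncard_le_ncard ?_ (Set.toFinite _))
    exact fun x hx => ⟨hx.1, hi hx⟩
  exact activeAt_subset_activeSet (i+1) (Or.inr h2)

lemma activeSet_closure (h : T ⊆ activeSet G τ S) : activeSet G τ T ⊆ activeSet G τ S := by
  have main : ∀ i, activeAt G τ T i ⊆ activeSet G τ S := by
    intro i
    induction i with
    | zero => exact h
    | succ i ih =>
      rintro x (hx | hx)
      · exact ih hx
      · refine mem_activeSet_of_threshold (le_trans hx ?_)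
        refine Set.ncard_le_ncard ?_ (Set.toFinite _)
        exact fun y hy => ⟨hy.1, ih hy.2⟩
  intro x hx
  obtain ⟨i, hi⟩ := Set.mem_iUnion.1 hx
  exact main i hi

lemma isTargetSet_mono (h : S ⊆ T) (hS : IsTargetSet G τ S) : IsTargetSet G τ T :=
  Set.eq_univ_of_univ_subset (hS ▸ activeSet_mono h)

lemma isTargetSet_of_subset_active (h : IsTargetSet G τ S) (hsub : S ⊆ activeSet G τ T) :
    IsTargetSet G τ T :=
  Set.eq_univ_of_univ_subset (h ▸ activeSet_closure hsub)

lemma one_le_ncard_of_mem {s : Set W} {a : W} (ha : a ∈ s) : 1 ≤ s.ncard :=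
  (Set.ncard_pos (Set.toFinite s)).2 ⟨a, ha⟩

lemma two_le_ncard_of_mem {s : Set W} {a b : W} (hab : a ≠ b) (ha : a ∈ s) (hb : b ∈ s) :
    2 ≤ s.ncard := by
  have : ({a, b} : Set W) ⊆ s := by
    intro x hx; rcases hx with rfl | hx
    · exact ha
    · rcases hx with rfl; exact hb
  calc 2 = ({a, b} : Set W).ncard := (Set.ncard_pair hab).symm
    _ ≤ s.ncard := Set.ncard_le_ncard this (Set.toFinite _)

end Basics

section Structure

instance : Finite GadVert :=
  Finite.of_surjective (fun n : Fin 4 => [GadVert.t, GadVert.h, GadVert.b1, GadVert.b2].get n)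
    (by rintro (_|_|_|_)
        · exact ⟨0, rfl⟩
        · exact ⟨1, rfl⟩
        · exact ⟨2, rfl⟩
        · exact ⟨3, rfl⟩)

instance [Finite V] : Finite (GadIdx V ℓ d) := by
  let f : GadIdx V ℓ d →
      (V × Fin ℓ) ⊕ (Fin ℓ × Σ v, Fin (d v)) ⊕ (Σ v, Fin (d v)) ⊕
      (V × Fin ℓ) ⊕ (Fin ℓ × Σ v, Fin (d v)) ⊕ (Σ v, Fin (d v)) := fun D =>
    match D with
    | .vx v i => .inl (v, i)
    | .xa i v j => .inr (.inl (i, ⟨v, j⟩))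
    | .av v j => .inr (.inr (.inl ⟨v, j⟩))
    | .vy v i => .inr (.inr (.inr (.inl (v, i))))
    | .yb i v j => .inr (.inr (.inr (.inr (.inl (i, ⟨v, j⟩)))))
    | .bv v j => .inr (.inr (.inr (.inr (.inr ⟨v, j⟩))))
  have hf : Function.Injective f := by
    intro a b hab
    cases a <;> cases b <;> simp_all [f]
  exact Finite.of_injective f hf

instance [Finite V] : Finite (HVert V ℓ d) := by
  let f : HVert V ℓ d →
      V ⊕ Fin ℓ ⊕ Fin ℓ ⊕ (Σ v, Fin (d v)) ⊕ (Σ v, Fin (d v)) ⊕ (GadIdx V ℓ d × GadVert) :=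
    fun p => match p with
    | .orig v => .inl v
    | .xx i => .inr (.inl i)
    | .yy i => .inr (.inr (.inl i))
    | .aa v j => .inr (.inr (.inr (.inl ⟨v, j⟩)))
    | .bb v j => .inr (.inr (.inr (.inr (.inl ⟨v, j⟩))))
    | .gad D g => .inr (.inr (.inr (.inr (.inr (D, g)))))
  have hf : Function.Injective f := by
    intro a b hab
    cases a <;> cases b <;> simp_all [f]
  exact Finite.of_injective f hf

lemma gadTail_ne_gad (D D' : GadIdx V ℓ d) (g : GadVert) : gadTail D ≠ HVert.gad D' g := by
  cases D <;> simp [gadTail]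

lemma gadHead_ne_gad (D D' : GadIdx V ℓ d) (g : GadVert) : gadHead D ≠ HVert.gad D' g := by
  cases D <;> simp [gadHead]

variable {G : SimpleGraph V}

lemma adj_iff {p q : HVert V ℓ d} :
    (graphH G ℓ d).Adj p q ↔ p ≠ q ∧ (HRel G ℓ d p q ∨ HRel G ℓ d q p) := by
  simp [graphH, SimpleGraph.fromRel_adj]

lemma adj_tail (D : GadIdx V ℓ d) : (graphH G ℓ d).Adj (gadTail D) (.gad D .t) := by
  rw [adj_iff]
  exact ⟨gadTail_ne_gad D D .t, Or.inl (Or.inr (Or.inr (Or.inr (Or.inl ⟨D, rfl, rfl⟩))))⟩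

lemma adj_head (D : GadIdx V ℓ d) : (graphH G ℓ d).Adj (gadHead D) (.gad D .h) := by
  rw [adj_iff]
  exact ⟨gadHead_ne_gad D D .h, Or.inl (Or.inr (Or.inr (Or.inr (Or.inr ⟨D, rfl, rfl⟩))))⟩

lemma adj_t_b1 (D : GadIdx V ℓ d) : (graphH G ℓ d).Adj (.gad D .t) (.gad D .b1) := by
  rw [adj_iff]
  exact ⟨by simp, Or.inl (Or.inr (Or.inl ⟨D, rfl, Or.inl rfl⟩))⟩

lemma adj_t_b2 (D : GadIdx V ℓ d) : (graphH G ℓ d).Adj (.gad D .t) (.gad D .b2) := by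
  rw [adj_iff]
  exact ⟨by simp, Or.inl (Or.inr (Or.inl ⟨D, rfl, Or.inr rfl⟩))⟩

lemma adj_h_b1 (D : GadIdx V ℓ d) : (graphH G ℓ d).Adj (.gad D .h) (.gad D .b1) := by
  rw [adj_iff]
  exact ⟨by simp, Or.inl (Or.inr (Or.inr (Or.inl ⟨D, rfl, Or.inl rfl⟩)))⟩

lemma adj_h_b2 (D : GadIdx V ℓ d) : (graphH G ℓ d).Adj (.gad D .h) (.gad D .b2) := by
  rw [adj_iff]
  exact ⟨by simp, Or.inl (Or.inr (Or.inr (Or.inl ⟨D, rfl, Or.inr rfl⟩)))⟩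

lemma adj_orig {u v : V} (h : G.Adj u v) :
    (graphH G ℓ d).Adj (.orig u) (.orig v) := by
  rw [adj_iff]
  exact ⟨by simp [h.ne], Or.inl (Or.inl ⟨u, v, h, rfl, rfl⟩)⟩

end Structure

section Inversion

variable {G : SimpleGraph V}

lemma adj_gad_t {w : HVert V ℓ d} {D : GadIdx V ℓ d}
    (h : (graphH G ℓ d).Adj w (.gad D .t)) :
    w = gadTail D ∨ w = .gad D .b1 ∨ w = .gad D .b2 := by
  rw [adj_iff] at h
  obtain ⟨hne, h | h⟩ := h <;>
    rcases h with ⟨u, v', hadj, h1, h2⟩ | ⟨D', h1, h2⟩ | ⟨D', h1, h2⟩ | ⟨D', h1, h2⟩ |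
      ⟨D', h1, h2⟩ <;>
    first
      | (cases D' <;> simp_all [gadTail, gadHead] <;> exact h1.2.symm)
      | (cases D' <;> simp_all [gadTail, gadHead])
      | simp_all [gadTail, gadHead]

lemma adj_gad_h {w : HVert V ℓ d} {D : GadIdx V ℓ d}
    (h : (graphH G ℓ d).Adj w (.gad D .h)) :
    w = gadHead D ∨ w = .gad D .b1 ∨ w = .gad D .b2 := by
  rw [adj_iff] at h
  obtain ⟨hne, h | h⟩ := h <;>
    rcases h with ⟨u, v', hadj, h1, h2⟩ | ⟨D', h1, h2⟩ | ⟨D', h1, h2⟩ | ⟨D', h1, h2⟩ |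
      ⟨D', h1, h2⟩ <;>
    first
      | (cases D' <;> simp_all [gadTail, gadHead] <;> exact h1.2.symm)
      | (cases D' <;> simp_all [gadTail, gadHead])
      | simp_all [gadTail, gadHead]

lemma adj_gad_b1 {w : HVert V ℓ d} {D : GadIdx V ℓ d}
    (h : (graphH G ℓ d).Adj w (.gad D .b1)) :
    w = .gad D .t ∨ w = .gad D .h := by
  rw [adj_iff] at h
  obtain ⟨hne, h | h⟩ := h <;>
    rcases h with ⟨u, v', hadj, h1, h2⟩ | ⟨D', h1, h2⟩ | ⟨D', h1, h2⟩ | ⟨D', h1, h2⟩ |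
      ⟨D', h1, h2⟩ <;>
    first
      | (cases D' <;> simp_all [gadTail, gadHead] <;> exact h1.2.symm)
      | (cases D' <;> simp_all [gadTail, gadHead])
      | simp_all [gadTail, gadHead]

lemma adj_gad_b2 {w : HVert V ℓ d} {D : GadIdx V ℓ d}
    (h : (graphH G ℓ d).Adj w (.gad D .b2)) :
    w = .gad D .t ∨ w = .gad D .h := by
  rw [adj_iff] at h
  obtain ⟨hne, h | h⟩ := h <;>
    rcases h with ⟨u, v', hadj, h1, h2⟩ | ⟨D', h1, h2⟩ | ⟨D', h1, h2⟩ | ⟨D', h1, h2⟩ |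
      ⟨D', h1, h2⟩ <;>
    first
      | (cases D' <;> simp_all [gadTail, gadHead] <;> exact h1.2.symm)
      | (cases D' <;> simp_all [gadTail, gadHead])
      | simp_all [gadTail, gadHead]

lemma adj_aa {w : HVert V ℓ d} {v : V} {j : Fin (d v)}
    (h : (graphH G ℓ d).Adj w (.aa v j)) :
    (∃ i, w = .gad (.xa i v j) .h) ∨ w = .gad (.av v j) .t := by
  rw [adj_iff] at h
  obtain ⟨hne, h | h⟩ := h <;>
    rcases h with ⟨u, v', hadj, h1, h2⟩ | ⟨D', h1, h2⟩ | ⟨D', h1, h2⟩ | ⟨D', h1, h2⟩ |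
      ⟨D', h1, h2⟩ <;>
    first
      | (cases D' <;> simp_all [gadTail, gadHead] <;> exact h1.2.symm)
      | (cases D' <;> simp_all [gadTail, gadHead])
      | simp_all [gadTail, gadHead]

lemma adj_bb {w : HVert V ℓ d} {v : V} {j : Fin (d v)}
    (h : (graphH G ℓ d).Adj w (.bb v j)) :
    (∃ i, w = .gad (.yb i v j) .h) ∨ w = .gad (.bv v j) .t := by
  rw [adj_iff] at h
  obtain ⟨hne, h | h⟩ := h <;>
    rcases h with ⟨u, v', hadj, h1, h2⟩ | ⟨D', h1, h2⟩ | ⟨D', h1, h2⟩ | ⟨D', h1, h2⟩ |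
      ⟨D', h1, h2⟩ <;>
    first
      | (cases D' <;> simp_all [gadTail, gadHead] <;> exact h1.2.symm)
      | (cases D' <;> simp_all [gadTail, gadHead])
      | simp_all [gadTail, gadHead]

end Inversion

section Act

variable [Finite V] {G : SimpleGraph V} {τ : V → ℕ} {n : ℕ}

lemma ncard_le_of_inj_forall_mem {α ι : Type*} [Finite α] {f : ι → α}
    (hf : Function.Injective f) {s : Set α} (hs : ∀ i, f i ∈ s) :
    Nat.card ι ≤ s.ncard := by
  calc Nat.card ι = (Set.range f).ncard := by
        rw [← Set.image_univ, Set.ncard_image_of_injective _ hf, Set.ncard_univ]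
    _ ≤ s.ncard := Set.ncard_le_ncard (Set.range_subset_iff.2 hs) (Set.toFinite _)

lemma gadget_active {S : Set (HVert V ℓ d)} {D : GadIdx V ℓ d}
    (hD : gadTail D ∈ activeSet (graphH G ℓ d) (tauH τ n ℓ d) S) :
    ∀ g, HVert.gad D g ∈ activeSet (graphH G ℓ d) (tauH τ n ℓ d) S := by
  have ht : HVert.gad D .t ∈ activeSet (graphH G ℓ d) (tauH τ n ℓ d) S := by
    apply mem_activeSet_of_threshold
    exact one_le_ncard_of_mem (a := gadTail D) ⟨(adj_tail D).symm, hD⟩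
  have hb1 : HVert.gad D .b1 ∈ activeSet (graphH G ℓ d) (tauH τ n ℓ d) S := by
    apply mem_activeSet_of_threshold
    exact one_le_ncard_of_mem (a := HVert.gad D .t) ⟨(adj_t_b1 D).symm, ht⟩
  have hb2 : HVert.gad D .b2 ∈ activeSet (graphH G ℓ d) (tauH τ n ℓ d) S := by
    apply mem_activeSet_of_threshold
    exact one_le_ncard_of_mem (a := HVert.gad D .t) ⟨(adj_t_b2 D).symm, ht⟩
  have hh : HVert.gad D .h ∈ activeSet (graphH G ℓ d) (tauH τ n ℓ d) S := by
    apply mem_activeSet_of_threshold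
    exact two_le_ncard_of_mem (a := HVert.gad D .b1) (b := HVert.gad D .b2) (by simp)
      ⟨adj_h_b1 D, hb1⟩ ⟨adj_h_b2 D, hb2⟩
  intro g; cases g
  · exact ht
  · exact hh
  · exact hb1
  · exact hb2

lemma gadget_active_of_b {S : Set (HVert V ℓ d)} {D : GadIdx V ℓ d}
    (hb : HVert.gad D .b1 ∈ activeSet (graphH G ℓ d) (tauH τ n ℓ d) S ∨
          HVert.gad D .b2 ∈ activeSet (graphH G ℓ d) (tauH τ n ℓ d) S) :
    ∀ g, HVert.gad D g ∈ activeSet (graphH G ℓ d) (tauH τ n ℓ d) S := by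
  have ht : HVert.gad D .t ∈ activeSet (graphH G ℓ d) (tauH τ n ℓ d) S := by
    apply mem_activeSet_of_threshold
    rcases hb with hb | hb
    · exact one_le_ncard_of_mem (a := HVert.gad D .b1) ⟨adj_t_b1 D, hb⟩
    · exact one_le_ncard_of_mem (a := HVert.gad D .b2) ⟨adj_t_b2 D, hb⟩
  have hb1 : HVert.gad D .b1 ∈ activeSet (graphH G ℓ d) (tauH τ n ℓ d) S := by
    apply mem_activeSet_of_threshold
    exact one_le_ncard_of_mem (a := HVert.gad D .t) ⟨(adj_t_b1 D).symm, ht⟩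
  have hb2 : HVert.gad D .b2 ∈ activeSet (graphH G ℓ d) (tauH τ n ℓ d) S := by
    apply mem_activeSet_of_threshold
    exact one_le_ncard_of_mem (a := HVert.gad D .t) ⟨(adj_t_b2 D).symm, ht⟩
  have hh : HVert.gad D .h ∈ activeSet (graphH G ℓ d) (tauH τ n ℓ d) S := by
    apply mem_activeSet_of_threshold
    exact two_le_ncard_of_mem (a := HVert.gad D .b1) (b := HVert.gad D .b2) (by simp)
      ⟨adj_h_b1 D, hb1⟩ ⟨adj_h_b2 D, hb2⟩
  intro g; cases g
  · exact ht
  · exact hh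
  · exact hb1
  · exact hb2

/-- If all original vertices are active, everything is active. -/
lemma target_of_orig_active {S : Set (HVert V ℓ d)} (hn : n = Nat.card V)
    (horig : ∀ v, HVert.orig v ∈ activeSet (graphH G ℓ d) (tauH τ n ℓ d) S) :
    IsTargetSet (graphH G ℓ d) (tauH τ n ℓ d) S := by
  have hvx : ∀ (v : V) (i : Fin ℓ) (g : GadVert),
      HVert.gad (.vx v i) g ∈ activeSet (graphH G ℓ d) (tauH τ n ℓ d) S :=
    fun v i g => gadget_active (D := .vx v i) (horig v) g
  have hvy : ∀ (v : V) (i : Fin ℓ) (g : GadVert),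
      HVert.gad (.vy v i) g ∈ activeSet (graphH G ℓ d) (tauH τ n ℓ d) S :=
    fun v i g => gadget_active (D := .vy v i) (horig v) g
  have hx : ∀ i : Fin ℓ, HVert.xx i ∈ activeSet (graphH G ℓ d) (tauH τ n ℓ d) S := by
    intro i
    apply mem_activeSet_of_threshold
    have hinj : Function.Injective (fun v : V => (HVert.gad (.vx v i) .h : HVert V ℓ d)) := by
      intro a b hab; simpa using hab
    have := ncard_le_of_inj_forall_mem hinj
      (s := (graphH G ℓ d).neighborSet (HVert.xx i) ∩ activeSet (graphH G ℓ d) (tauH τ n ℓ d) S)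
      (fun v => ⟨adj_head (.vx v i), hvx v i .h⟩)
    simpa [tauH, hn] using this
  have hy : ∀ i : Fin ℓ, HVert.yy i ∈ activeSet (graphH G ℓ d) (tauH τ n ℓ d) S := by
    intro i
    apply mem_activeSet_of_threshold
    have hinj : Function.Injective (fun v : V => (HVert.gad (.vy v i) .h : HVert V ℓ d)) := by
      intro a b hab; simpa using hab
    have := ncard_le_of_inj_forall_mem hinj
      (s := (graphH G ℓ d).neighborSet (HVert.yy i) ∩ activeSet (graphH G ℓ d) (tauH τ n ℓ d) S)
      (fun v => ⟨adj_head (.vy v i), hvy v i .h⟩)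
    simpa [tauH, hn] using this
  have hxa : ∀ (i : Fin ℓ) (v : V) (j : Fin (d v)) (g : GadVert),
      HVert.gad (.xa i v j) g ∈ activeSet (graphH G ℓ d) (tauH τ n ℓ d) S :=
    fun i v j g => gadget_active (D := .xa i v j) (hx i) g
  have hyb : ∀ (i : Fin ℓ) (v : V) (j : Fin (d v)) (g : GadVert),
      HVert.gad (.yb i v j) g ∈ activeSet (graphH G ℓ d) (tauH τ n ℓ d) S :=
    fun i v j g => gadget_active (D := .yb i v j) (hy i) g
  have ha : ∀ (v : V) (j : Fin (d v)),
      HVert.aa v j ∈ activeSet (graphH G ℓ d) (tauH τ n ℓ d) S := by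
    intro v j
    apply mem_activeSet_of_threshold
    have hinj : Function.Injective (fun i : Fin ℓ => (HVert.gad (.xa i v j) .h : HVert V ℓ d)) := by
      intro a b hab; simpa using hab
    have := ncard_le_of_inj_forall_mem hinj
      (s := (graphH G ℓ d).neighborSet (HVert.aa v j) ∩ activeSet (graphH G ℓ d) (tauH τ n ℓ d) S)
      (fun i => ⟨adj_head (.xa i v j), hxa i v j .h⟩)
    simpa [tauH] using this
  have hb : ∀ (v : V) (j : Fin (d v)),
      HVert.bb v j ∈ activeSet (graphH G ℓ d) (tauH τ n ℓ d) S := by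
    intro v j
    apply mem_activeSet_of_threshold
    have hinj : Function.Injective (fun i : Fin ℓ => (HVert.gad (.yb i v j) .h : HVert V ℓ d)) := by
      intro a b hab; simpa using hab
    have := ncard_le_of_inj_forall_mem hinj
      (s := (graphH G ℓ d).neighborSet (HVert.bb v j) ∩ activeSet (graphH G ℓ d) (tauH τ n ℓ d) S)
      (fun i => ⟨adj_head (.yb i v j), hyb i v j .h⟩)
    simpa [tauH] using this
  have hav : ∀ (v : V) (j : Fin (d v)) (g : GadVert),
      HVert.gad (.av v j) g ∈ activeSet (graphH G ℓ d) (tauH τ n ℓ d) S :=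
    fun v j g => gadget_active (D := .av v j) (ha v j) g
  have hbv : ∀ (v : V) (j : Fin (d v)) (g : GadVert),
      HVert.gad (.bv v j) g ∈ activeSet (graphH G ℓ d) (tauH τ n ℓ d) S :=
    fun v j g => gadget_active (D := .bv v j) (hb v j) g
  apply Set.eq_univ_of_forall
  intro w
  cases w with
  | orig v => exact horig v
  | xx i => exact hx i
  | yy i => exact hy i
  | aa v j => exact ha v j
  | bb v j => exact hb v j
  | gad D g =>
    cases D with
    | vx v i => exact hvx v i g
    | xa i v j => exact hxa i v j g
    | av v j => exact hav v j g
    | vy v i => exact hvy v i g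
    | yb i v j => exact hyb i v j g
    | bv v j => exact hbv v j g

lemma XSet_target (hn : n = Nat.card V) (hτd : ∀ v, τ v ≤ d v) :
    IsTargetSet (graphH G ℓ d) (tauH τ n ℓ d) (XSet V ℓ d) := by
  have hx : ∀ i : Fin ℓ, HVert.xx i ∈ activeSet (graphH G ℓ d) (tauH τ n ℓ d) (XSet V ℓ d) :=
    fun i => subset_activeSet ⟨i, rfl⟩
  have hxa : ∀ (i : Fin ℓ) (v : V) (j : Fin (d v)) (g : GadVert),
      HVert.gad (.xa i v j) g ∈ activeSet (graphH G ℓ d) (tauH τ n ℓ d) (XSet V ℓ d) :=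
    fun i v j g => gadget_active (D := .xa i v j) (hx i) g
  have ha : ∀ (v : V) (j : Fin (d v)),
      HVert.aa v j ∈ activeSet (graphH G ℓ d) (tauH τ n ℓ d) (XSet V ℓ d) := by
    intro v j
    apply mem_activeSet_of_threshold
    have hinj : Function.Injective (fun i : Fin ℓ => (HVert.gad (.xa i v j) .h : HVert V ℓ d)) := by
      intro a b hab; simpa using hab
    have := ncard_le_of_inj_forall_mem hinj
      (s := (graphH G ℓ d).neighborSet (HVert.aa v j) ∩
        activeSet (graphH G ℓ d) (tauH τ n ℓ d) (XSet V ℓ d))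
      (fun i => ⟨adj_head (.xa i v j), hxa i v j .h⟩)
    simpa [tauH] using this
  have hav : ∀ (v : V) (j : Fin (d v)) (g : GadVert),
      HVert.gad (.av v j) g ∈ activeSet (graphH G ℓ d) (tauH τ n ℓ d) (XSet V ℓ d) :=
    fun v j g => gadget_active (D := .av v j) (ha v j) g
  apply target_of_orig_active hn
  intro v
  apply mem_activeSet_of_threshold
  have hinj : Function.Injective (fun j : Fin (d v) => (HVert.gad (.av v j) .h : HVert V ℓ d)) := by
    intro a b hab; simpa using hab
  have := ncard_le_of_inj_forall_mem hinj
    (s := (graphH G ℓ d).neighborSet (HVert.orig v) ∩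
      activeSet (graphH G ℓ d) (tauH τ n ℓ d) (XSet V ℓ d))
    (fun j => ⟨adj_head (.av v j), hav v j .h⟩)
  simp only [Nat.card_eq_fintype_card, Fintype.card_fin] at this
  exact le_trans (by simpa [tauH] using hτd v) this

lemma YSet_target (hn : n = Nat.card V) (hτd : ∀ v, τ v ≤ d v) :
    IsTargetSet (graphH G ℓ d) (tauH τ n ℓ d) (YSet V ℓ d) := by
  have hy : ∀ i : Fin ℓ, HVert.yy i ∈ activeSet (graphH G ℓ d) (tauH τ n ℓ d) (YSet V ℓ d) :=
    fun i => subset_activeSet ⟨i, rfl⟩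
  have hyb : ∀ (i : Fin ℓ) (v : V) (j : Fin (d v)) (g : GadVert),
      HVert.gad (.yb i v j) g ∈ activeSet (graphH G ℓ d) (tauH τ n ℓ d) (YSet V ℓ d) :=
    fun i v j g => gadget_active (D := .yb i v j) (hy i) g
  have hb : ∀ (v : V) (j : Fin (d v)),
      HVert.bb v j ∈ activeSet (graphH G ℓ d) (tauH τ n ℓ d) (YSet V ℓ d) := by
    intro v j
    apply mem_activeSet_of_threshold
    have hinj : Function.Injective (fun i : Fin ℓ => (HVert.gad (.yb i v j) .h : HVert V ℓ d)) := by
      intro a b hab; simpa using hab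
    have := ncard_le_of_inj_forall_mem hinj
      (s := (graphH G ℓ d).neighborSet (HVert.bb v j) ∩
        activeSet (graphH G ℓ d) (tauH τ n ℓ d) (YSet V ℓ d))
      (fun i => ⟨adj_head (.yb i v j), hyb i v j .h⟩)
    simpa [tauH] using this
  have hbv : ∀ (v : V) (j : Fin (d v)) (g : GadVert),
      HVert.gad (.bv v j) g ∈ activeSet (graphH G ℓ d) (tauH τ n ℓ d) (YSet V ℓ d) :=
    fun v j g => gadget_active (D := .bv v j) (hb v j) g
  apply target_of_orig_active hn
  intro v
  apply mem_activeSet_of_threshold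
  have hinj : Function.Injective (fun j : Fin (d v) => (HVert.gad (.bv v j) .h : HVert V ℓ d)) := by
    intro a b hab; simpa using hab
  have := ncard_le_of_inj_forall_mem hinj
    (s := (graphH G ℓ d).neighborSet (HVert.orig v) ∩
      activeSet (graphH G ℓ d) (tauH τ n ℓ d) (YSet V ℓ d))
    (fun j => ⟨adj_head (.bv v j), hbv v j .h⟩)
  simp only [Nat.card_eq_fintype_card, Fintype.card_fin] at this
  exact le_trans (by simpa [tauH] using hτd v) this

end Act

section Norm

/-- Normalization map sending every vertex of `H` to a vertex of `V ∪ X ∪ Y`. -/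
def phi : HVert V ℓ d → HVert V ℓ d
  | .orig v => .orig v
  | .xx i => .xx i
  | .yy i => .yy i
  | .aa v _ => .orig v
  | .bb v _ => .orig v
  | .gad (.vx v _) _ => .orig v
  | .gad (.xa i _ _) _ => .xx i
  | .gad (.av v _) _ => .orig v
  | .gad (.vy v _) _ => .orig v
  | .gad (.yb i _ _) _ => .yy i
  | .gad (.bv v _) _ => .orig v

/-- "second kind" vertices: vertices whose activation is only useful for a single
original vertex, its representative. -/
def sk : HVert V ℓ d → Option V
  | .aa v _ => some v
  | .bb v _ => some v
  | .gad (.av v _) _ => some v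
  | .gad (.bv v _) _ => some v
  | _ => none

def goodv (A' : Set (HVert V ℓ d)) (w : HVert V ℓ d) : Prop :=
  w ∈ A' ∨ ∃ v, sk w = some v ∧ HVert.orig v ∈ A'

variable [Finite V] {G : SimpleGraph V} {τ : V → ℕ} {n : ℕ}

lemma phi_invariant (hn : n = Nat.card V) {S : Set (HVert V ℓ d)} :
    ∀ i, activeAt (graphH G ℓ d) (tauH τ n ℓ d) S i ⊆
      {w | goodv (activeSet (graphH G ℓ d) (tauH τ n ℓ d) (phi '' S)) w} := by
  set A' := activeSet (graphH G ℓ d) (tauH τ n ℓ d) (phi '' S) with hA'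
  intro i
  induction i with
  | zero =>
    intro w hw
    have hmem : phi w ∈ A' := subset_activeSet ⟨w, hw, rfl⟩
    cases w with
    | orig v => exact Or.inl hmem
    | xx i => exact Or.inl hmem
    | yy i => exact Or.inl hmem
    | aa v j => exact Or.inr ⟨v, rfl, hmem⟩
    | bb v j => exact Or.inr ⟨v, rfl, hmem⟩
    | gad D g =>
      cases D with
      | vx v i => exact Or.inl (gadget_active (D := .vx v i) hmem g)
      | xa i v j => exact Or.inl (gadget_active (D := .xa i v j) hmem g)
      | av v j => exact Or.inr ⟨v, rfl, hmem⟩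
      | vy v i => exact Or.inl (gadget_active (D := .vy v i) hmem g)
      | yb i v j => exact Or.inl (gadget_active (D := .yb i v j) hmem g)
      | bv v j => exact Or.inr ⟨v, rfl, hmem⟩
  | succ i ih =>
    rintro w (hw | hthr)
    · exact ih hw
    · have hthr' : tauH τ n ℓ d w ≤
          ((graphH G ℓ d).neighborSet w ∩ activeAt (graphH G ℓ d) (tauH τ n ℓ d) S i).ncard :=
        hthr
      by_cases hsub : (graphH G ℓ d).neighborSet w ∩
          activeAt (graphH G ℓ d) (tauH τ n ℓ d) S i ⊆ A'
      · left
        apply mem_activeSet_of_threshold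
        exact le_trans hthr' (Set.ncard_le_ncard (fun x hx => ⟨hx.1, hsub hx⟩) (Set.toFinite _))
      · obtain ⟨u, hu, hunot⟩ := Set.not_subset.1 hsub
        have hgood := (ih hu.2).resolve_left hunot
        obtain ⟨v0, hsk, hov⟩ := hgood
        -- u is adjacent to w
        have hadj : (graphH G ℓ d).Adj w u := hu.1
        clear hu hunot hsub
        cases u with
        | orig v => simp [sk] at hsk
        | xx i' => simp [sk] at hsk
        | yy i' => simp [sk] at hsk
        | aa v j =>
          have hv0 : v = v0 := by simpa [sk] using hsk
          subst hv0
          rcases adj_aa hadj with ⟨i0, rfl⟩ | rfl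
          · -- special case : w is the head of the gadget from x_{i0} to a_{v,j}
            left
            have hbex : HVert.gad (.xa i0 v j) .b1 ∈
                  activeAt (graphH G ℓ d) (tauH τ n ℓ d) S i ∨
                HVert.gad (.xa i0 v j) .b2 ∈
                  activeAt (graphH G ℓ d) (tauH τ n ℓ d) S i := by
              by_contra hcon
              push_neg at hcon
              have hsub1 : (graphH G ℓ d).neighborSet (HVert.gad (.xa i0 v j) .h) ∩
                  activeAt (graphH G ℓ d) (tauH τ n ℓ d) S i ⊆ {HVert.aa v j} := by
                rintro q ⟨hq1, hq2⟩
                rcases adj_gad_h (SimpleGraph.Adj.symm hq1) with hq | hq | hq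
                · exact hq
                · exact absurd (hq ▸ hq2) hcon.1
                · exact absurd (hq ▸ hq2) hcon.2
              have h1 := Set.ncard_le_ncard hsub1 (Set.toFinite _)
              rw [Set.ncard_singleton] at h1
              have h2 : 2 ≤ ((graphH G ℓ d).neighborSet (HVert.gad (.xa i0 v j) .h) ∩
                  activeAt (graphH G ℓ d) (tauH τ n ℓ d) S i).ncard := hthr'
              omega
            have hbA : HVert.gad (.xa i0 v j) .b1 ∈ A' ∨ HVert.gad (.xa i0 v j) .b2 ∈ A' := by
              rcases hbex with hb | hb
              · rcases ih hb with h | ⟨v', hv', _⟩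
                · exact Or.inl h
                · simp [sk] at hv'
              · rcases ih hb with h | ⟨v', hv', _⟩
                · exact Or.inr h
                · simp [sk] at hv'
            exact gadget_active_of_b (D := .xa i0 v j) hbA .h
          · exact Or.inr ⟨v, rfl, hov⟩
        | bb v j =>
          have hv0 : v = v0 := by simpa [sk] using hsk
          subst hv0
          rcases adj_bb hadj with ⟨i0, rfl⟩ | rfl
          · left
            have hbex : HVert.gad (.yb i0 v j) .b1 ∈
                  activeAt (graphH G ℓ d) (tauH τ n ℓ d) S i ∨
                HVert.gad (.yb i0 v j) .b2 ∈
                  activeAt (graphH G ℓ d) (tauH τ n ℓ d) S i := by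
              by_contra hcon
              push_neg at hcon
              have hsub1 : (graphH G ℓ d).neighborSet (HVert.gad (.yb i0 v j) .h) ∩
                  activeAt (graphH G ℓ d) (tauH τ n ℓ d) S i ⊆ {HVert.bb v j} := by
                rintro q ⟨hq1, hq2⟩
                rcases adj_gad_h (SimpleGraph.Adj.symm hq1) with hq | hq | hq
                · exact hq
                · exact absurd (hq ▸ hq2) hcon.1
                · exact absurd (hq ▸ hq2) hcon.2
              have h1 := Set.ncard_le_ncard hsub1 (Set.toFinite _)
              rw [Set.ncard_singleton] at h1
              have h2 : 2 ≤ ((graphH G ℓ d).neighborSet (HVert.gad (.yb i0 v j) .h) ∩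
                  activeAt (graphH G ℓ d) (tauH τ n ℓ d) S i).ncard := hthr'
              omega
            have hbA : HVert.gad (.yb i0 v j) .b1 ∈ A' ∨ HVert.gad (.yb i0 v j) .b2 ∈ A' := by
              rcases hbex with hb | hb
              · rcases ih hb with h | ⟨v', hv', _⟩
                · exact Or.inl h
                · simp [sk] at hv'
              · rcases ih hb with h | ⟨v', hv', _⟩
                · exact Or.inr h
                · simp [sk] at hv'
            exact gadget_active_of_b (D := .yb i0 v j) hbA .h
          · exact Or.inr ⟨v, rfl, hov⟩
        | gad D g =>
          cases D with
          | vx v i' => simp [sk] at hsk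
          | xa i' v j => simp [sk] at hsk
          | vy v i' => simp [sk] at hsk
          | yb i' v j => simp [sk] at hsk
          | av v j =>
            have hv0 : v = v0 := by simpa [sk] using hsk
            subst hv0
            cases g with
            | t =>
              rcases adj_gad_t hadj with rfl | rfl | rfl
              · exact Or.inr ⟨v, rfl, hov⟩
              · exact Or.inr ⟨v, rfl, hov⟩
              · exact Or.inr ⟨v, rfl, hov⟩
            | h =>
              rcases adj_gad_h hadj with rfl | rfl | rfl
              · exact Or.inl hov
              · exact Or.inr ⟨v, rfl, hov⟩
              · exact Or.inr ⟨v, rfl, hov⟩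
            | b1 =>
              rcases adj_gad_b1 hadj with rfl | rfl
              · exact Or.inr ⟨v, rfl, hov⟩
              · exact Or.inr ⟨v, rfl, hov⟩
            | b2 =>
              rcases adj_gad_b2 hadj with rfl | rfl
              · exact Or.inr ⟨v, rfl, hov⟩
              · exact Or.inr ⟨v, rfl, hov⟩
          | bv v j =>
            have hv0 : v = v0 := by simpa [sk] using hsk
            subst hv0
            cases g with
            | t =>
              rcases adj_gad_t hadj with rfl | rfl | rfl
              · exact Or.inr ⟨v, rfl, hov⟩
              · exact Or.inr ⟨v, rfl, hov⟩
              · exact Or.inr ⟨v, rfl, hov⟩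
            | h =>
              rcases adj_gad_h hadj with rfl | rfl | rfl
              · exact Or.inl hov
              · exact Or.inr ⟨v, rfl, hov⟩
              · exact Or.inr ⟨v, rfl, hov⟩
            | b1 =>
              rcases adj_gad_b1 hadj with rfl | rfl
              · exact Or.inr ⟨v, rfl, hov⟩
              · exact Or.inr ⟨v, rfl, hov⟩
            | b2 =>
              rcases adj_gad_b2 hadj with rfl | rfl
              · exact Or.inr ⟨v, rfl, hov⟩
              · exact Or.inr ⟨v, rfl, hov⟩

lemma phi_target (hn : n = Nat.card V) {S : Set (HVert V ℓ d)}
    (hS : IsTargetSet (graphH G ℓ d) (tauH τ n ℓ d) S) :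
    IsTargetSet (graphH G ℓ d) (tauH τ n ℓ d) (phi '' S) := by
  apply target_of_orig_active hn
  intro v
  have hv : HVert.orig v ∈ activeSet (graphH G ℓ d) (tauH τ n ℓ d) S :=
    hS ▸ Set.mem_univ _
  obtain ⟨i, hi⟩ := Set.mem_iUnion.1 hv
  rcases phi_invariant hn i hi with h | ⟨v', hv', _⟩
  · exact h
  · simp [sk] at hv'

end Norm

section Seq

variable {W : Type*} [Finite W]

lemma symmDiff_image_subset (f : W → W) (A B : Set W) :
    symmDiff (f '' A) (f '' B) ⊆ f '' (symmDiff A B) := by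
  intro x hx
  rw [Set.mem_symmDiff] at hx
  rcases hx with ⟨⟨a, ha, rfl⟩, hnb⟩ | ⟨⟨a, ha, rfl⟩, hnb⟩
  · exact ⟨a, Set.mem_symmDiff.2 (Or.inl ⟨ha, fun hb => hnb ⟨a, hb, rfl⟩⟩), rfl⟩
  · exact ⟨a, Set.mem_symmDiff.2 (Or.inr ⟨ha, fun hb => hnb ⟨a, hb, rfl⟩⟩), rfl⟩

lemma seqSize_shift (T : ℕ) (f : ℕ → Set W) :
    seqSize T (fun t => f (t + 1)) ≤ seqSize (T + 1) f := by
  apply Finset.sup_le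
  intro t ht
  exact Finset.le_sup (f := fun t => (f t).ncard)
    (Finset.mem_range.2 (by have := Finset.mem_range.1 ht; omega))

lemma delazify (P : Set W → Prop) :
    ∀ (T : ℕ) (f : ℕ → Set W), (∀ t ≤ T, P (f t)) →
      (∀ t < T, (symmDiff (f t) (f (t + 1))).ncard ≤ 1) →
      ∃ T' g, g 0 = f 0 ∧ g T' = f T ∧ (∀ t ≤ T', P (g t)) ∧
        (∀ t < T', (symmDiff (g t) (g (t + 1))).ncard = 1) ∧
        seqSize T' g ≤ seqSize T f := by
  intro T
  induction T with
  | zero =>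
    intro f hP _
    exact ⟨0, f, rfl, rfl, fun t ht => by rw [Nat.le_zero.1 ht]; exact hP 0 le_rfl,
      fun t ht => absurd ht (Nat.not_lt_zero t), le_rfl⟩
  | succ T ih =>
    intro f hP hstep
    obtain ⟨T', g, hg0, hgT, hgP, hgstep, hgsize⟩ :=
      ih (fun t => f (t + 1)) (fun t ht => hP (t + 1) (Nat.succ_le_succ ht))
        (fun t ht => hstep (t + 1) (Nat.succ_lt_succ ht))
    by_cases heq : f 0 = f 1
    · exact ⟨T', g, hg0.trans heq.symm, hgT, hgP, hgstep,
        hgsize.trans (seqSize_shift T f)⟩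
    · refine ⟨T' + 1, fun t => match t with | 0 => f 0 | (t + 1) => g t, rfl, hgT, ?_, ?_, ?_⟩
      · intro t ht
        match t with
        | 0 => exact hP 0 (Nat.zero_le _)
        | (t + 1) => exact hgP t (Nat.succ_le_succ_iff.1 ht)
      · intro t ht
        match t with
        | 0 =>
          show (symmDiff (f 0) (g 0)).ncard = 1
          rw [hg0]
          have h1 : (symmDiff (f 0) (f (0 + 1))).ncard ≤ 1 := hstep 0 (Nat.succ_pos T)
          have hne : (symmDiff (f 0) (f (0 + 1))).Nonempty := by
            rw [Set.nonempty_iff_ne_empty]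
            intro hem
            exact heq (show f 0 = f 1 from by rwa [← Set.bot_eq_empty, symmDiff_eq_bot] at hem)
          have h2 := (Set.ncard_pos (Set.toFinite _)).2 hne
          omega
        | (t + 1) =>
          show (symmDiff (g t) (g (t + 1))).ncard = 1
          exact hgstep t (Nat.succ_lt_succ_iff.1 ht)
      · apply Finset.sup_le
        intro t ht
        match t with
        | 0 =>
          show (f 0).ncard ≤ seqSize (T + 1) f
          exact Finset.le_sup (f := fun t => (f t).ncard) (Finset.mem_range.2 (Nat.succ_pos _))
        | (t + 1) =>
          show (g t).ncard ≤ seqSize (T + 1) f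
          refine le_trans ?_ (hgsize.trans (seqSize_shift T f))
          exact Finset.le_sup (f := fun t => (g t).ncard)
            (Finset.mem_range.2 (by have := Finset.mem_range.1 ht; omega))

end Seq

section Expl

/-- Explicit (lazy) reconfiguration sequence from `X` to `Y`: first add all of `Y`,
then remove all of `X`. -/
def explSeq (V : Type*) (ℓ : ℕ) (d : V → ℕ) (t : ℕ) : Set (HVert V ℓ d) :=
  (XSet V ℓ d \ (HVert.xx '' {i : Fin ℓ | (i : ℕ) < t - ℓ})) ∪
    (HVert.yy '' {i : Fin ℓ | (i : ℕ) < t})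

lemma explSeq_zero : explSeq V ℓ d 0 = XSet V ℓ d := by
  simp [explSeq]

lemma explSeq_last (hℓ : 1 ≤ ℓ) : explSeq V ℓ d (2 * ℓ) = YSet V ℓ d := by
  have h1 : {i : Fin ℓ | (i : ℕ) < 2 * ℓ - ℓ} = Set.univ := by
    ext i; simpa using by omega
  have h2 : {i : Fin ℓ | (i : ℕ) < 2 * ℓ} = Set.univ := by
    ext i; simpa using by have := i.isLt; omega
  simp [explSeq, h1, h2, XSet, YSet, Set.image_univ]

variable [Finite V] {G : SimpleGraph V} {τ : V → ℕ} {n : ℕ}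

lemma explSeq_target (hn : n = Nat.card V) (hτd : ∀ v, τ v ≤ d v) (t : ℕ) :
    IsTargetSet (graphH G ℓ d) (tauH τ n ℓ d) (explSeq V ℓ d t) := by
  rcases le_or_gt t ℓ with h | h
  · refine isTargetSet_mono ?_ (XSet_target hn hτd)
    intro x hx
    left
    refine ⟨hx, ?_⟩
    have : t - ℓ = 0 := Nat.sub_eq_zero_of_le h
    simp [this]
  · refine isTargetSet_mono ?_ (YSet_target hn hτd)
    rintro x ⟨i, rfl⟩
    right
    exact ⟨i, i.isLt.trans h, rfl⟩

lemma explSeq_step {t : ℕ} (ht : t < 2 * ℓ) :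
    (symmDiff (explSeq V ℓ d t) (explSeq V ℓ d (t + 1))).ncard ≤ 1 := by
  have calc1 : ∀ (c : HVert V ℓ d),
      symmDiff (explSeq V ℓ d t) (explSeq V ℓ d (t + 1)) ⊆ {c} →
      (symmDiff (explSeq V ℓ d t) (explSeq V ℓ d (t + 1))).ncard ≤ 1 := by
    intro c hsub
    calc (symmDiff (explSeq V ℓ d t) (explSeq V ℓ d (t + 1))).ncard
        ≤ ({c} : Set (HVert V ℓ d)).ncard := Set.ncard_le_ncard hsub (Set.toFinite _)
      _ = 1 := Set.ncard_singleton _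
  rcases lt_or_ge t ℓ with h | h
  · have hshed : t - ℓ = 0 := Nat.sub_eq_zero_of_le h.le
    have hshed' : t + 1 - ℓ = 0 := Nat.sub_eq_zero_of_le h
    apply calc1 (HVert.yy ⟨t, h⟩)
    intro q hq
    rw [Set.mem_symmDiff] at hq
    rcases hq with ⟨hqa, hqb⟩ | ⟨hqb, hqa⟩
    · exfalso
      apply hqb
      rcases hqa with hqa | ⟨i, hi, rfl⟩
      · exact Or.inl (by simpa [explSeq, hshed, hshed'] using hqa)
      · simp only [Set.mem_setOf_eq] at hi
        exact Or.inr ⟨i, by simp only [Set.mem_setOf_eq]; omega, rfl⟩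
    · rcases hqb with hqx | ⟨i, hi, rfl⟩
      · exact absurd (Or.inl (by simpa [explSeq, hshed, hshed'] using hqx)) hqa
      · simp only [Set.mem_setOf_eq] at hi
        rcases Nat.lt_or_ge (i : ℕ) t with hi' | hi'
        · exact absurd (Or.inr ⟨i, by simp only [Set.mem_setOf_eq]; omega, rfl⟩) hqa
        · have hit : (i : ℕ) = t := by omega
          simp [Set.mem_singleton_iff, show i = (⟨t, h⟩ : Fin ℓ) from Fin.ext hit]
  · have hlt : t - ℓ < ℓ := by omega
    apply calc1 (HVert.xx ⟨t - ℓ, hlt⟩)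
    intro q hq
    rw [Set.mem_symmDiff] at hq
    rcases hq with ⟨hqa, hqb⟩ | ⟨hqb, hqa⟩
    · rcases hqa with ⟨hqx, hqsh⟩ | ⟨i, hi, rfl⟩
      · have hq2 : q ∉ XSet V ℓ d \ (HVert.xx '' {i : Fin ℓ | (i : ℕ) < t + 1 - ℓ}) := by
          intro hc; exact hqb (Or.inl hc)
        rcases hqx with ⟨i, rfl⟩
        have hi1 : (i : ℕ) < t + 1 - ℓ := by
          by_contra hcon
          refine hq2 ⟨⟨i, rfl⟩, ?_⟩
          rintro ⟨i', hi', hii⟩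
          have hii' : i' = i := by simpa using hii
          simp only [Set.mem_setOf_eq] at hi'
          omega
        have hnot : ¬ (i : ℕ) < t - ℓ := by
          intro hc; exact hqsh ⟨i, by simp only [Set.mem_setOf_eq]; omega, rfl⟩
        have hit : (i : ℕ) = t - ℓ := by omega
        simp [Set.mem_singleton_iff, show i = (⟨t - ℓ, hlt⟩ : Fin ℓ) from Fin.ext hit]
      · exfalso
        simp only [Set.mem_setOf_eq] at hi
        exact hqb (Or.inr ⟨i, by simp only [Set.mem_setOf_eq]; omega, rfl⟩)
    · exfalso
      apply hqa
      rcases hqb with ⟨hqx, hqsh⟩ | ⟨i, hi, rfl⟩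
      · refine Or.inl ⟨hqx, ?_⟩
        rintro ⟨i', hi', rfl⟩
        simp only [Set.mem_setOf_eq] at hi'
        exact hqsh ⟨i', by simp only [Set.mem_setOf_eq]; omega, rfl⟩
      · exact Or.inr ⟨i, by simp only [Set.mem_setOf_eq]; have := i.isLt; omega, rfl⟩

end Expl

section PhiImage

lemma phi_image_X : phi '' XSet V ℓ d = XSet V ℓ d := by
  ext q
  constructor
  · rintro ⟨p, ⟨i, rfl⟩, rfl⟩; exact ⟨i, rfl⟩
  · rintro ⟨i, rfl⟩; exact ⟨.xx i, ⟨i, rfl⟩, rfl⟩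

lemma phi_image_Y : phi '' YSet V ℓ d = YSet V ℓ d := by
  ext q
  constructor
  · rintro ⟨p, ⟨i, rfl⟩, rfl⟩; exact ⟨i, rfl⟩
  · rintro ⟨i, rfl⟩; exact ⟨.yy i, ⟨i, rfl⟩, rfl⟩

lemma phi_mem_union (p : HVert V ℓ d) :
    phi p ∈ OrigSet V ℓ d ∪ XSet V ℓ d ∪ YSet V ℓ d := by
  cases p with
  | orig v => exact Or.inl (Or.inl ⟨v, rfl⟩)
  | xx i => exact Or.inl (Or.inr ⟨i, rfl⟩)
  | yy i => exact Or.inr ⟨i, rfl⟩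
  | aa v j => exact Or.inl (Or.inl ⟨v, rfl⟩)
  | bb v j => exact Or.inl (Or.inl ⟨v, rfl⟩)
  | gad D g =>
    cases D with
    | vx v i => exact Or.inl (Or.inl ⟨v, rfl⟩)
    | xa i v j => exact Or.inl (Or.inr ⟨i, rfl⟩)
    | av v j => exact Or.inl (Or.inl ⟨v, rfl⟩)
    | vy v i => exact Or.inl (Or.inl ⟨v, rfl⟩)
    | yb i v j => exact Or.inr ⟨i, rfl⟩
    | bv v j => exact Or.inl (Or.inl ⟨v, rfl⟩)

end PhiImage







end TSS

open TSS in
/-- There is an optimal reconfiguration sequence from `X` to `Y` in `H` consisting only of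
subsets of `V ∪ X ∪ Y`. -/
theorem stmt9 {V : Type*} [Fintype V] (G : SimpleGraph V) [DecidableRel G.Adj] (τ : V → ℕ)
    (ℓ : ℕ) (hℓ : 1 ≤ ℓ) (hiso : ∀ v : V, 0 < G.degree v) (hτ : ∀ v : V, τ v ≤ G.degree v) :
    ∃ T Sfam,
      IsReconfSeq (graphH G ℓ (fun v => G.degree v)) (tauH τ (Fintype.card V) ℓ (fun v => G.degree v))
        (XSet V ℓ (fun v => G.degree v)) (YSet V ℓ (fun v => G.degree v)) T Sfam ∧
      (∀ t ≤ T, Sfam t ⊆ OrigSet V ℓ (fun v => G.degree v) ∪ XSet V ℓ (fun v => G.degree v) ∪ YSet V ℓ (fun v => G.degree v)) ∧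
      seqSize T Sfam = optReconf (graphH G ℓ (fun v => G.degree v)) (tauH τ (Fintype.card V) ℓ (fun v => G.degree v))
        (XSet V ℓ (fun v => G.degree v)) (YSet V ℓ (fun v => G.degree v)) := by
  classical
  have hn : Fintype.card V = Nat.card V := Nat.card_eq_fintype_card.symm
  obtain ⟨T0, g0, hg00, hg0T, hg0P, hg0step, _⟩ :=
    delazify
      (P := fun S => IsTargetSet (graphH G ℓ (fun v => G.degree v))
        (tauH τ (Fintype.card V) ℓ (fun v => G.degree v)) S)
      (2 * ℓ) (explSeq V ℓ (fun v => G.degree v))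
      (fun t _ => explSeq_target hn hτ t)
      (fun t ht => explSeq_step ht)
  have hMne : {m | ∃ T Sfam, IsReconfSeq (graphH G ℓ (fun v => G.degree v))
      (tauH τ (Fintype.card V) ℓ (fun v => G.degree v))
      (XSet V ℓ (fun v => G.degree v)) (YSet V ℓ (fun v => G.degree v)) T Sfam ∧
      seqSize T Sfam = m}.Nonempty :=
    ⟨seqSize T0 g0, T0, g0,
      ⟨hg00.trans explSeq_zero, hg0T.trans (explSeq_last hℓ), hg0P, hg0step⟩, rfl⟩
  have hmem := Nat.sInf_mem hMne
  obtain ⟨T, f, hseq, hsize⟩ := hmem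
  have hP' : ∀ t ≤ T, IsTargetSet (graphH G ℓ (fun v => G.degree v))
        (tauH τ (Fintype.card V) ℓ (fun v => G.degree v)) (phi '' f t) ∧
      phi '' f t ⊆ OrigSet V ℓ (fun v => G.degree v) ∪ XSet V ℓ (fun v => G.degree v) ∪
        YSet V ℓ (fun v => G.degree v) := by
    intro t ht
    refine ⟨phi_target hn (hseq.target t ht), ?_⟩
    rintro x ⟨a, -, rfl⟩
    exact phi_mem_union a
  have hstep' : ∀ t < T, (symmDiff (phi '' f t) (phi '' f (t + 1))).ncard ≤ 1 := by
    intro t ht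
    calc (symmDiff (phi '' f t) (phi '' f (t + 1))).ncard
        ≤ (phi '' symmDiff (f t) (f (t + 1))).ncard :=
          Set.ncard_le_ncard (symmDiff_image_subset _ _ _) (Set.toFinite _)
      _ ≤ (symmDiff (f t) (f (t + 1))).ncard := Set.ncard_image_le (Set.toFinite _)
      _ ≤ 1 := le_of_eq (hseq.step t ht)
  obtain ⟨T', g, hg0, hgT, hgP, hgstep, hgsize⟩ :=
    delazify
      (P := fun S => IsTargetSet (graphH G ℓ (fun v => G.degree v))
          (tauH τ (Fintype.card V) ℓ (fun v => G.degree v)) S ∧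
        S ⊆ OrigSet V ℓ (fun v => G.degree v) ∪ XSet V ℓ (fun v => G.degree v) ∪
          YSet V ℓ (fun v => G.degree v))
      T (fun t => phi '' f t) hP' hstep'
  have hrs : IsReconfSeq (graphH G ℓ (fun v => G.degree v))
      (tauH τ (Fintype.card V) ℓ (fun v => G.degree v))
      (XSet V ℓ (fun v => G.degree v)) (YSet V ℓ (fun v => G.degree v)) T' g := by
    refine ⟨?_, ?_, fun t ht => (hgP t ht).1, hgstep⟩
    · exact hg0.trans (by rw [hseq.head]; exact phi_image_X)
    · exact hgT.trans (by rw [hseq.last]; exact phi_image_Y)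
  refine ⟨T', g, hrs, fun t ht => (hgP t ht).2, ?_⟩
  apply le_antisymm
  · calc seqSize T' g ≤ seqSize T (fun t => phi '' f t) := hgsize
      _ ≤ seqSize T f :=
        Finset.sup_mono_fun (fun t _ => Set.ncard_image_le (Set.toFinite _))
      _ = _ := hsize
  · exact Nat.sInf_le ⟨T', g, hrs, rfl⟩
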